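/- arXiv:2411.03317 — 2 statements merged into one kernel-verified Lean document; each statement's English description precedes it below -/
import Mathlib

section
/- Asymptotic behaviour at the origin: as ρ → 0⁺, the boundary integrand is asymptotically equivalent to −1/(ρ + λ e^{−iπ α₂} ρ^{1−α₂}); precisely, lim_{ρ→0⁺} (ρ + λ e^{−iπ α₂} ρ^{1−α₂}) / (ρ(1 + λ ρ^{h(ρ)} e^{iπ h(ρ)})) = 1. -/
open MeasureTheory Filter Set

/-- `g(s) = s·A(s) = (α₁ s + α₂ c)/(s + c)`, where `A` is the Laplace transform of the
exponential transition function `α(t) = α₂ + (α₁ - α₂)e^{-c t}`. -/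
noncomputable def gfun (α₁ α₂ c : ℝ) (s : ℂ) : ℂ := ((α₁ : ℂ) * s + (α₂ : ℂ) * c) / (s + c)

/-- The Laplace-domain solution `ũ(s) = s^{g(s)-1}/(s^{g(s)} + λ)` (principal powers) of the
Scarpi relaxation equation with exponential transition function and `u₀ = 1`. -/
noncomputable def utilde (α₁ α₂ c lam : ℝ) (s : ℂ) : ℂ :=
  s ^ (gfun α₁ α₂ c s - 1) / (s ^ gfun α₁ α₂ c s + (lam : ℂ))

/-- `h(ρ) = (α₁ ρ - α₂ c)/(c - ρ)`; note `g(-ρ) = -h(ρ)`. -/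
noncomputable def hfun (α₁ α₂ c : ℝ) (ρ : ℝ) : ℝ := (α₁ * ρ - α₂ * c) / (c - ρ)

/-!
Since `h(0) = -α₂` and `h(ρ) + α₂ = ρ (α₁ - α₂)/(c - ρ)` vanishes to first order, the factor
`ρ^{h(ρ)}` behaves like `ρ^{-α₂}`: indeed `ρ^{h(ρ) + α₂} = exp (O(ρ log ρ)) → 1`.
Dividing numerator and denominator by `ρ^{1-α₂}` turns both into `ρ^{α₂} + λ e^{-iπα₂} + o(1)`,
and `ρ^{α₂} → 0` because `α₂ > 0`.
-/

open Topology

theorem tendsto_rpow_mul_self_nhdsGT_zero {g : ℝ → ℝ} {a : ℝ}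
    (hg : Tendsto g (𝓝[>] 0) (𝓝 a)) :
    Tendsto (fun ρ : ℝ => ρ ^ (ρ * g ρ)) (𝓝[>] 0) (𝓝 1) := by
  have hlog : Tendsto (fun ρ : ℝ => ρ * Real.log ρ * g ρ) (𝓝[>] 0) (𝓝 0) := by
    have h := Real.continuous_mul_log.tendsto 0
    simp only [zero_mul] at h
    simpa using (h.mono_left nhdsWithin_le_nhds).mul hg
  have hexp := (Real.continuous_exp.tendsto 0).comp hlog
  rw [Real.exp_zero] at hexp
  refine hexp.congr' ?_
  filter_upwards [self_mem_nhdsWithin] with ρ (hρ : 0 < ρ)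
  rw [Function.comp_apply, Real.rpow_def_of_pos hρ]
  ring_nf

section hfun

variable {α₁ α₂ c : ℝ}

theorem continuousAt_hfun_zero (hc : c ≠ 0) : ContinuousAt (hfun α₁ α₂ c) 0 :=
  ContinuousAt.div (by fun_prop) (by fun_prop) (by simpa using hc)

theorem hfun_zero (hc : c ≠ 0) : hfun α₁ α₂ c 0 = -α₂ := by
  simp [hfun, neg_div, mul_div_cancel_right₀ _ hc]

theorem hfun_add_eq_mul {ρ : ℝ} (hρ : ρ ≠ c) :
    hfun α₁ α₂ c ρ + α₂ = ρ * ((α₁ - α₂) / (c - ρ)) := by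
  have : c - ρ ≠ 0 := sub_ne_zero.mpr hρ.symm
  unfold hfun
  field_simp
  ring

theorem tendsto_rpow_hfun_add_nhdsGT_zero (hc : c ≠ 0) :
    Tendsto (fun ρ : ℝ => ρ ^ (hfun α₁ α₂ c ρ + α₂)) (𝓝[>] 0) (𝓝 1) := by
  have hg : Tendsto (fun ρ : ℝ => (α₁ - α₂) / (c - ρ)) (𝓝[>] 0) (𝓝 ((α₁ - α₂) / (c - 0))) :=
    tendsto_const_nhds.div (tendsto_const_nhds.sub (tendsto_id.mono_left nhdsWithin_le_nhds))
      (by simpa using hc)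
  refine (tendsto_rpow_mul_self_nhdsGT_zero hg).congr' ?_
  have hne : ∀ᶠ ρ in 𝓝[>] (0 : ℝ), ρ ≠ c :=
    (continuousAt_id.eventually_ne hc.symm).filter_mono nhdsWithin_le_nhds
  filter_upwards [hne] with ρ hρ
  rw [hfun_add_eq_mul hρ]

theorem tendsto_exp_pi_hfun_mul_I_nhdsGT_zero (hc : c ≠ 0) :
    Tendsto (fun ρ : ℝ => Complex.exp (Real.pi * hfun α₁ α₂ c ρ * Complex.I)) (𝓝[>] 0)
      (𝓝 (Complex.exp (-(Real.pi * α₂ * Complex.I)))) := by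
  have h := (continuousAt_hfun_zero (α₁ := α₁) (α₂ := α₂) hc).tendsto.mono_left
    (nhdsWithin_le_nhds (s := Ioi 0))
  rw [hfun_zero hc] at h
  have e : -((Real.pi : ℂ) * α₂ * Complex.I) = Real.pi * ((-α₂ : ℝ) : ℂ) * Complex.I := by
    push_cast
    ring
  rw [e]
  exact ((tendsto_const_nhds.mul (Complex.continuous_ofReal.tendsto _ |>.comp h)).mul
    tendsto_const_nhds).cexp

end hfun

theorem ofReal_rpow_one_sub_mul_rpow {ρ : ℝ} (hρ : 0 < ρ) (a : ℝ) :
    ((ρ ^ (1 - a) : ℝ) : ℂ) * ((ρ ^ a : ℝ) : ℂ) = ρ := by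
  rw [← Complex.ofReal_mul, ← Real.rpow_add hρ, sub_add_cancel, Real.rpow_one]

theorem ofReal_add_mul_rpow_one_sub {ρ : ℝ} (hρ : 0 < ρ) (a : ℝ) (z : ℂ) :
    (ρ : ℂ) + z * ((ρ ^ (1 - a) : ℝ) : ℂ) =
      ((ρ ^ (1 - a) : ℝ) : ℂ) * (((ρ ^ a : ℝ) : ℂ) + z) := by
  rw [← ofReal_rpow_one_sub_mul_rpow hρ a]
  ring

theorem ofReal_mul_one_add_mul_rpow {ρ : ℝ} (hρ : 0 < ρ) (a b : ℝ) (z w : ℂ) :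
    (ρ : ℂ) * (1 + z * ((ρ ^ b : ℝ) : ℂ) * w) =
      ((ρ ^ (1 - a) : ℝ) : ℂ) * (((ρ ^ a : ℝ) : ℂ) + z * ((ρ ^ (b + a) : ℝ) : ℂ) * w) := by
  rw [← ofReal_rpow_one_sub_mul_rpow hρ a, Real.rpow_add hρ b a]
  push_cast
  ring

theorem boundary_integrand_asymptotics_origin_general
    (α₁ α₂ c lam : ℝ) (h0 : 0 < α₁) (h12 : α₁ < α₂)
    (hc : 0 < c) (hlam : 0 < lam) :
    Tendsto (fun ρ : ℝ =>
        ((ρ : ℂ) + (lam : ℂ) * Complex.exp (-((Real.pi : ℂ) * (α₂ : ℂ) * Complex.I)) *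
            ((ρ ^ (1 - α₂) : ℝ) : ℂ)) /
        ((ρ : ℂ) * (1 + (lam : ℂ) * ((ρ ^ hfun α₁ α₂ c ρ : ℝ) : ℂ) *
          Complex.exp ((Real.pi : ℂ) * (hfun α₁ α₂ c ρ : ℂ) * Complex.I))))
      (nhdsWithin 0 (Set.Ioi 0)) (nhds 1) := by
  set L : ℂ := lam * Complex.exp (-(Real.pi * α₂ * Complex.I))
  have hL : L ≠ 0 := mul_ne_zero (by exact_mod_cast hlam.ne') (Complex.exp_ne_zero _)
  have hα₂ : 0 < α₂ := h0.trans h12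
  have hpow : Tendsto (fun ρ : ℝ => ((ρ ^ α₂ : ℝ) : ℂ)) (𝓝[>] 0) (𝓝 0) := by
    have h := (Real.continuousAt_rpow_const 0 α₂ (Or.inr hα₂.le)).tendsto.mono_left
      (nhdsWithin_le_nhds (s := Ioi 0))
    rw [Real.zero_rpow hα₂.ne'] at h
    simpa using h.ofReal
  have hnum : Tendsto (fun ρ : ℝ => ((ρ ^ α₂ : ℝ) : ℂ) + L) (𝓝[>] 0) (𝓝 L) := by
    simpa using hpow.add_const L
  have hden : Tendsto (fun ρ : ℝ => ((ρ ^ α₂ : ℝ) : ℂ) +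
      lam * ((ρ ^ (hfun α₁ α₂ c ρ + α₂) : ℝ) : ℂ) *
        Complex.exp (Real.pi * hfun α₁ α₂ c ρ * Complex.I)) (𝓝[>] 0) (𝓝 L) := by
    have hB := (tendsto_rpow_hfun_add_nhdsGT_zero (α₁ := α₁) (α₂ := α₂) hc.ne').ofReal
    simpa [L] using hpow.add ((hB.const_mul (lam : ℂ)).mul
      (tendsto_exp_pi_hfun_mul_I_nhdsGT_zero hc.ne'))
  have hlim := hnum.div hden hL
  rw [div_self hL] at hlim
  refine hlim.congr' ?_
  filter_upwards [self_mem_nhdsWithin] with ρ (hρ : 0 < ρ)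
  rw [Pi.div_apply, ofReal_add_mul_rpow_one_sub hρ α₂, ofReal_mul_one_add_mul_rpow hρ α₂,
    mul_div_mul_left _ _ (by exact_mod_cast (Real.rpow_pos_of_pos hρ _).ne')]

/-- Asymptotic behaviour at the origin: the boundary integrand is asymptotically equivalent to
`-1/(ρ + λ e^{-iπ α₂} ρ^{1-α₂})` as `ρ → 0⁺`; precisely,
`(ρ + λ e^{-iπ α₂} ρ^{1-α₂}) / (ρ(1 + λ ρ^{h(ρ)} e^{iπ h(ρ)})) → 1`. -/
theorem boundary_integrand_asymptotics_origin
    (α₁ α₂ c lam t : ℝ) (h0 : 0 < α₁) (h12 : α₁ < α₂) (h21 : α₂ < 1)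
    (hc : 0 < c) (hlam : 0 < lam) (ht : 0 < t) :
    Tendsto (fun ρ : ℝ =>
        ((ρ : ℂ) + (lam : ℂ) * Complex.exp (-((Real.pi : ℂ) * (α₂ : ℂ) * Complex.I)) *
            ((ρ ^ (1 - α₂) : ℝ) : ℂ)) /
        ((ρ : ℂ) * (1 + (lam : ℂ) * ((ρ ^ hfun α₁ α₂ c ρ : ℝ) : ℂ) *
          Complex.exp ((Real.pi : ℂ) * (hfun α₁ α₂ c ρ : ℂ) * Complex.I))))
      (nhdsWithin 0 (Set.Ioi 0)) (nhds 1) :=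
  boundary_integrand_asymptotics_origin_general α₁ α₂ c lam h0 h12 hc hlam
end

section
/- Assume in addition c > 1 and that 1 + λ ρ^{h(ρ)} e^{iπ h(ρ)} ≠ 0 for every ρ ∈ (0,∞) ∖ {c}. Then the complex-valued function ρ ↦ e^{−ρ t} / (ρ(1 + λ ρ^{h(ρ)} e^{iπ h(ρ)})) is Lebesgue integrable on (0,∞). -/
/-! The term `Z(ρ) = λ ρ^{h(ρ)} e^{iπ h(ρ)}` of the denominator has modulus `λ ρ^{h(ρ)}`,
and `h(ρ) = -α₁ + (α₂ - α₁) c / (ρ - c)` has a simple pole at `c`. Since `c > 1`, `|Z|` tends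
to `0` as `ρ → c⁻` and as `ρ → ∞`, and to `∞` as `ρ → c⁺`; in all three regimes
`|1 + Z|⁻¹ ≤ 2`, so the integrand is `O(e^{-tρ})`. Near `0` we have `h ≤ -α₂`, hence
`|Z| ≥ λ ρ^{-α₂}` and the integrand is `O(ρ^{α₂-1})`, integrable since `α₂ > 0`. Elsewhere
the integrand is continuous because `1 + Z ≠ 0`. -/

open MeasureTheory Filter Set

open Topology Asymptotics

lemma MeasureTheory.IntegrableAtFilter.nhds_of_nhdsNE {X E : Type*} [TopologicalSpace X]
    [MeasurableSpace X] [MeasurableSingletonClass X] [NormedAddCommGroup E] {μ : Measure X}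
    [SigmaFinite μ]
    {f : X → E} {x : X} (h : IntegrableAtFilter f (𝓝[≠] x) μ) : IntegrableAtFilter f (𝓝 x) μ := by
  obtain ⟨s, hs, hf⟩ := h
  refine ⟨insert x s, insert_mem_nhds_iff.2 hs, ?_⟩
  rw [insert_eq]
  exact (integrableOn_singleton (hx := measure_singleton_lt_top)).union hf

lemma ContinuousOn.locallyIntegrableOn_of_diff_singleton {X E : Type*} [TopologicalSpace X]
    [T1Space X] [MeasurableSpace X] [OpensMeasurableSpace X] [NormedAddCommGroup E]
    {μ : Measure X} [IsLocallyFiniteMeasure μ] [SecondCountableTopologyEither X E]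
    {f : X → E} {s : Set X} {c : X} (hs : IsOpen s) (hf : ContinuousOn f (s \ {c}))
    (hc : IntegrableAtFilter f (𝓝 c) μ) : LocallyIntegrableOn f s μ := by
  intro x hx
  rw [hs.nhdsWithin_eq hx]
  rcases eq_or_ne x c with rfl | hxc
  · exact hc
  · have hopen : IsOpen (s \ {c}) := hs.sdiff isClosed_singleton
    simpa [hopen.nhdsWithin_eq ⟨hx, hxc⟩] using
      hf.integrableAt_nhdsWithin hopen.measurableSet ⟨hx, hxc⟩

lemma norm_inv_one_add_le_div_of_two_le_norm {𝕜 : Type*} [NormedDivisionRing 𝕜] {z : 𝕜}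
    (hz : 2 ≤ ‖z‖) : ‖(1 + z)⁻¹‖ ≤ 2 / ‖z‖ := by
  have h := norm_sub_norm_le z (-1)
  rw [norm_neg, norm_one, sub_neg_eq_add, add_comm] at h
  rw [norm_inv, le_div_iff₀ (by linarith), inv_mul_le_iff₀ (by linarith)]
  linarith

lemma norm_inv_one_add_le_two {𝕜 : Type*} [NormedDivisionRing 𝕜] {z : 𝕜}
    (hz : ‖z‖ ≤ 1 / 2 ∨ 2 ≤ ‖z‖) : ‖(1 + z)⁻¹‖ ≤ 2 := by
  rcases hz with hz | hz
  · have h := norm_sub_norm_le (1 : 𝕜) (-z)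
    rw [norm_neg, norm_one, sub_neg_eq_add] at h
    rw [norm_inv]
    exact inv_le_of_inv_le₀ (by norm_num) (by linarith)
  · calc ‖(1 + z)⁻¹‖ ≤ 2 / ‖z‖ := norm_inv_one_add_le_div_of_two_le_norm hz
      _ ≤ 1 := (div_le_one (by linarith)).2 hz
      _ ≤ 2 := by norm_num

noncomputable def boundaryTerm (α₁ α₂ c lam ρ : ℝ) : ℂ :=
  (lam : ℂ) * ((ρ ^ hfun α₁ α₂ c ρ : ℝ) : ℂ) *
    Complex.exp ((Real.pi : ℂ) * (hfun α₁ α₂ c ρ : ℂ) * Complex.I)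

noncomputable def boundaryIntegrand (α₁ α₂ c lam t ρ : ℝ) : ℂ :=
  ((Real.exp (-ρ * t) : ℝ) : ℂ) / ((ρ : ℂ) * (1 + boundaryTerm α₁ α₂ c lam ρ))

section
variable {α₁ α₂ c lam t ρ : ℝ}

lemma hfun_eq_neg_add (hρ : ρ ≠ c) :
    hfun α₁ α₂ c ρ = -α₁ + (α₂ - α₁) * c * (ρ - c)⁻¹ := by
  have : ρ - c ≠ 0 := sub_ne_zero.2 hρ
  have : c - ρ ≠ 0 := sub_ne_zero.2 hρ.symm
  unfold hfun
  field_simp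
  ring

lemma hfun_le_of_nonneg_of_lt (h12 : α₁ ≤ α₂) (hρ : 0 ≤ ρ) (hρc : ρ < c) :
    hfun α₁ α₂ c ρ ≤ -α₂ := by
  unfold hfun
  rw [div_le_iff₀ (sub_pos.2 hρc)]
  nlinarith

lemma tendsto_hfun_nhdsLT (h12 : α₁ < α₂) (hc : 0 < c) :
    Tendsto (hfun α₁ α₂ c) (𝓝[<] c) atBot := by
  have hsub : Tendsto (fun ρ => ρ - c) (𝓝[<] c) (𝓝[<] 0) := by
    refine tendsto_nhdsWithin_iff.2 ⟨?_, ?_⟩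
    · exact ((continuous_sub_right c).tendsto' c 0 (sub_self c)).mono_left nhdsWithin_le_nhds
    · filter_upwards [self_mem_nhdsWithin] with ρ hρ using mem_Iio.2 (sub_neg.2 hρ)
  have hpole := (tendsto_inv_nhdsLT_zero.comp hsub).const_mul_atBot
    (show 0 < (α₂ - α₁) * c by nlinarith)
  refine (tendsto_atBot_add_const_left _ (-α₁) hpole).congr' ?_
  filter_upwards [self_mem_nhdsWithin] with ρ hρ using (hfun_eq_neg_add hρ.ne).symm

lemma tendsto_hfun_nhdsGT (h12 : α₁ < α₂) (hc : 0 < c) :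
    Tendsto (hfun α₁ α₂ c) (𝓝[>] c) atTop := by
  have hsub : Tendsto (fun ρ => ρ - c) (𝓝[>] c) (𝓝[>] 0) := by
    refine tendsto_nhdsWithin_iff.2 ⟨?_, ?_⟩
    · exact ((continuous_sub_right c).tendsto' c 0 (sub_self c)).mono_left nhdsWithin_le_nhds
    · filter_upwards [self_mem_nhdsWithin] with ρ hρ using mem_Ioi.2 (sub_pos.2 hρ)
  have hpole := (tendsto_inv_nhdsGT_zero.comp hsub).const_mul_atTop
    (show 0 < (α₂ - α₁) * c by nlinarith)
  refine (tendsto_atTop_add_const_left _ (-α₁) hpole).congr' ?_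
  filter_upwards [self_mem_nhdsWithin] with ρ hρ using (hfun_eq_neg_add hρ.ne').symm

lemma tendsto_hfun_atTop : Tendsto (hfun α₁ α₂ c) atTop (𝓝 (-α₁)) := by
  have hinv : Tendsto (fun ρ => (ρ - c)⁻¹) atTop (𝓝 0) :=
    tendsto_inv_atTop_zero.comp (tendsto_atTop_add_const_right _ _ tendsto_id)
  have := (hinv.const_mul ((α₂ - α₁) * c)).const_add (-α₁)
  rw [mul_zero, add_zero] at this
  refine this.congr' ?_
  filter_upwards [eventually_gt_atTop c] with ρ hρ using (hfun_eq_neg_add hρ.ne').symm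

lemma tendsto_rpow_hfun_nhdsLT (h12 : α₁ < α₂) (hc1 : 1 < c) :
    Tendsto (fun ρ => ρ ^ hfun α₁ α₂ c ρ) (𝓝[<] c) (𝓝 0) := by
  have hc : 0 < c := by linarith
  have hlog : Tendsto Real.log (𝓝[<] c) (𝓝 (Real.log c)) :=
    (Real.continuousAt_log hc.ne').tendsto.mono_left nhdsWithin_le_nhds
  refine (Real.tendsto_exp_atBot.comp
    (hlog.pos_mul_atBot (Real.log_pos hc1) (tendsto_hfun_nhdsLT h12 hc))).congr' ?_
  filter_upwards [Ioo_mem_nhdsLT hc] with ρ hρ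
  exact (Real.rpow_def_of_pos hρ.1 _).symm

lemma tendsto_rpow_hfun_nhdsGT (h12 : α₁ < α₂) (hc1 : 1 < c) :
    Tendsto (fun ρ => ρ ^ hfun α₁ α₂ c ρ) (𝓝[>] c) atTop := by
  have hc : 0 < c := by linarith
  have hlog : Tendsto Real.log (𝓝[>] c) (𝓝 (Real.log c)) :=
    (Real.continuousAt_log hc.ne').tendsto.mono_left nhdsWithin_le_nhds
  refine (Real.tendsto_exp_atTop.comp
    (hlog.pos_mul_atTop (Real.log_pos hc1) (tendsto_hfun_nhdsGT h12 hc))).congr' ?_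
  filter_upwards [self_mem_nhdsWithin] with ρ hρ
  exact (Real.rpow_def_of_pos (hc.trans hρ) _).symm

lemma tendsto_rpow_hfun_atTop (h0 : 0 < α₁) :
    Tendsto (fun ρ => ρ ^ hfun α₁ α₂ c ρ) atTop (𝓝 0) := by
  refine (Real.tendsto_exp_atBot.comp
    (Real.tendsto_log_atTop.atTop_mul_neg (neg_neg_of_pos h0)
      (tendsto_hfun_atTop (α₂ := α₂) (c := c)))).congr' ?_
  filter_upwards [eventually_gt_atTop 0] with ρ hρ
  exact (Real.rpow_def_of_pos hρ _).symm

lemma norm_boundaryTerm (hlam : 0 ≤ lam) (hρ : 0 ≤ ρ) :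
    ‖boundaryTerm α₁ α₂ c lam ρ‖ = lam * ρ ^ hfun α₁ α₂ c ρ := by
  have hexp := Complex.norm_exp_ofReal_mul_I (Real.pi * hfun α₁ α₂ c ρ)
  push_cast at hexp
  rw [boundaryTerm, norm_mul, norm_mul, hexp, mul_one, Complex.norm_of_nonneg hlam,
    Complex.norm_of_nonneg (Real.rpow_nonneg hρ _)]

lemma norm_boundaryIntegrand (hρ : 0 < ρ) :
    ‖boundaryIntegrand α₁ α₂ c lam t ρ‖ =
      Real.exp (-ρ * t) / ρ * ‖(1 + boundaryTerm α₁ α₂ c lam ρ)⁻¹‖ := by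
  rw [boundaryIntegrand, norm_div, norm_mul, Complex.norm_of_nonneg hρ.le,
    Complex.norm_of_nonneg (Real.exp_pos _).le, norm_inv]
  ring

lemma measurable_boundaryIntegrand : Measurable (boundaryIntegrand α₁ α₂ c lam t) := by
  unfold boundaryIntegrand boundaryTerm hfun
  fun_prop

lemma continuousOn_boundaryIntegrand
    (hnz : ∀ ρ : ℝ, 0 < ρ → ρ ≠ c → 1 + boundaryTerm α₁ α₂ c lam ρ ≠ 0) :
    ContinuousOn (boundaryIntegrand α₁ α₂ c lam t) (Ioi 0 \ {c}) := by
  have hh : ContinuousOn (hfun α₁ α₂ c) (Ioi 0 \ {c}) := by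
    unfold hfun
    fun_prop (disch := exact fun x hx => sub_ne_zero.2 (Ne.symm hx.2))
  have hpow : ContinuousOn (fun ρ : ℝ => ρ ^ hfun α₁ α₂ c ρ) (Ioi 0 \ {c}) :=
    continuousOn_id.rpow hh fun x hx => Or.inl hx.1.ne'
  unfold boundaryIntegrand boundaryTerm
  refine ContinuousOn.div (by fun_prop) (by fun_prop) fun x hx => ?_
  exact mul_ne_zero (Complex.ofReal_ne_zero.2 hx.1.ne') (hnz x hx.1 hx.2)

lemma boundaryIntegrand_isBigO_exp {l : Filter ℝ} (hlam : 0 ≤ lam) (hl : ∀ᶠ ρ in l, 1 ≤ ρ)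
    (hpow : Tendsto (fun ρ => ρ ^ hfun α₁ α₂ c ρ) l (𝓝 0) ∨
      Tendsto (fun ρ => ρ ^ hfun α₁ α₂ c ρ) l atTop) :
    boundaryIntegrand α₁ α₂ c lam t =O[l] fun ρ => Real.exp (-t * ρ) := by
  have hZ : ∀ᶠ ρ in l, lam * ρ ^ hfun α₁ α₂ c ρ ≤ 1 / 2 ∨ 2 ≤ lam * ρ ^ hfun α₁ α₂ c ρ := by
    rcases hpow with hpow | hpow
    · have := hpow.const_mul lam
      rw [mul_zero] at this
      exact (this.eventually (eventually_le_nhds (by norm_num))).mono fun _ => Or.inl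
    · rcases hlam.eq_or_lt with rfl | hlam
      · exact Eventually.of_forall fun _ => Or.inl (by norm_num)
      · exact ((hpow.const_mul_atTop hlam).eventually_ge_atTop 2).mono fun _ => Or.inr
  refine IsBigO.of_bound 2 ?_
  filter_upwards [hl, hZ] with ρ hρ hρZ
  have hρ0 : 0 < ρ := by linarith
  rw [← norm_boundaryTerm hlam hρ0.le] at hρZ
  rw [norm_boundaryIntegrand hρ0, Real.norm_of_nonneg (Real.exp_pos _).le]
  calc Real.exp (-ρ * t) / ρ * ‖(1 + boundaryTerm α₁ α₂ c lam ρ)⁻¹‖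
      ≤ Real.exp (-ρ * t) * 2 :=
        mul_le_mul (div_le_self (Real.exp_pos _).le hρ) (norm_inv_one_add_le_two hρZ)
          (norm_nonneg _) (Real.exp_pos _).le
    _ = 2 * Real.exp (-t * ρ) := by ring_nf

lemma boundaryIntegrand_isBigO_rpow_nhdsGT_zero (h12 : α₁ ≤ α₂) (hα₂ : 0 < α₂) (hc1 : 1 < c)
    (hlam : 0 < lam) (ht : 0 ≤ t) :
    boundaryIntegrand α₁ α₂ c lam t =O[𝓝[>] 0] fun ρ => ρ ^ (α₂ - 1) := by
  have hlarge : ∀ᶠ ρ in 𝓝[>] (0 : ℝ), 2 ≤ lam * ρ ^ (-α₂) :=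
    ((tendsto_rpow_neg_nhdsGT_zero (neg_neg_of_pos hα₂)).const_mul_atTop hlam).eventually_ge_atTop
      2
  refine IsBigO.of_bound (2 / lam) ?_
  filter_upwards [hlarge, Ioo_mem_nhdsGT one_pos] with ρ hρ2 ⟨hρ0, hρ1⟩
  have hpow : ρ ^ (-α₂) ≤ ρ ^ hfun α₁ α₂ c ρ :=
    Real.rpow_le_rpow_of_exponent_ge hρ0 hρ1.le
      (hfun_le_of_nonneg_of_lt h12 hρ0.le (hρ1.trans hc1))
  have hZ' : lam * ρ ^ (-α₂) ≤ ‖boundaryTerm α₁ α₂ c lam ρ‖ := by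
    rw [norm_boundaryTerm hlam.le hρ0.le]
    exact mul_le_mul_of_nonneg_left hpow hlam.le
  have hexp : Real.exp (-ρ * t) ≤ 1 := Real.exp_le_one_iff.2 (by nlinarith)
  rw [norm_boundaryIntegrand hρ0, Real.norm_of_nonneg (Real.rpow_nonneg hρ0.le _)]
  calc Real.exp (-ρ * t) / ρ * ‖(1 + boundaryTerm α₁ α₂ c lam ρ)⁻¹‖
      ≤ 1 / ρ * (2 / (lam * ρ ^ (-α₂))) := by
        gcongr
        exact (norm_inv_one_add_le_div_of_two_le_norm (hρ2.trans hZ')).trans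
          (div_le_div_of_nonneg_left zero_le_two (by linarith) hZ')
    _ = 2 / lam * ρ ^ (α₂ - 1) := by
        rw [Real.rpow_neg hρ0.le, Real.rpow_sub_one hρ0.ne']
        field_simp

lemma integrableAtFilter_boundaryIntegrand {l : Filter ℝ} [l.IsMeasurablyGenerated]
    (hlam : 0 ≤ lam) (ht : 0 < t) (hl : ∀ᶠ ρ in l, 1 ≤ ρ)
    (hpow : Tendsto (fun ρ => ρ ^ hfun α₁ α₂ c ρ) l (𝓝 0) ∨
      Tendsto (fun ρ => ρ ^ hfun α₁ α₂ c ρ) l atTop) :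
    IntegrableAtFilter (boundaryIntegrand α₁ α₂ c lam t) l :=
  (boundaryIntegrand_isBigO_exp hlam hl hpow).integrableAtFilter
    measurable_boundaryIntegrand.stronglyMeasurable.stronglyMeasurableAtFilter
    ⟨Ioi 0, mem_of_superset hl fun _ hρ => mem_Ioi.2 (zero_lt_one.trans_le hρ),
      exp_neg_integrableOn_Ioi 0 ht⟩

lemma integrableAtFilter_boundaryIntegrand_nhdsNE (h12 : α₁ < α₂) (hc1 : 1 < c)
    (hlam : 0 ≤ lam) (ht : 0 < t) :
    IntegrableAtFilter (boundaryIntegrand α₁ α₂ c lam t) (𝓝[≠] c) := by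
  have hge : ∀ l ≤ 𝓝 c, ∀ᶠ ρ in l, 1 ≤ ρ := fun l hl => (eventually_ge_nhds hc1).filter_mono hl
  rw [← nhdsLT_sup_nhdsGT, IntegrableAtFilter.sup_iff]
  exact ⟨integrableAtFilter_boundaryIntegrand hlam ht (hge _ nhdsWithin_le_nhds)
      (.inl (tendsto_rpow_hfun_nhdsLT h12 hc1)),
    integrableAtFilter_boundaryIntegrand hlam ht (hge _ nhdsWithin_le_nhds)
      (.inr (tendsto_rpow_hfun_nhdsGT h12 hc1))⟩

lemma integrableAtFilter_boundaryIntegrand_nhdsGT_zero (h12 : α₁ ≤ α₂) (hα₂ : 0 < α₂)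
    (hc1 : 1 < c) (hlam : 0 < lam) (ht : 0 ≤ t) :
    IntegrableAtFilter (boundaryIntegrand α₁ α₂ c lam t) (𝓝[>] 0) :=
  (boundaryIntegrand_isBigO_rpow_nhdsGT_zero h12 hα₂ hc1 hlam ht).integrableAtFilter
    measurable_boundaryIntegrand.stronglyMeasurable.stronglyMeasurableAtFilter
    ⟨_, Ioo_mem_nhdsGT one_pos,
      (intervalIntegral.integrableOn_Ioo_rpow_iff one_pos).2 (by linarith)⟩

end

theorem boundary_integrand_integrable_general
    (α₁ α₂ c lam t : ℝ) (h0 : 0 < α₁) (h12 : α₁ < α₂)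
    (hlam : 0 < lam) (ht : 0 < t) (hc1 : 1 < c)
    (hnz : ∀ ρ : ℝ, 0 < ρ → ρ ≠ c →
      1 + (lam : ℂ) * ((ρ ^ hfun α₁ α₂ c ρ : ℝ) : ℂ) *
        Complex.exp ((Real.pi : ℂ) * (hfun α₁ α₂ c ρ : ℂ) * Complex.I) ≠ 0) :
    IntegrableOn (fun ρ : ℝ => ((Real.exp (-ρ * t) : ℝ) : ℂ) /
        ((ρ : ℂ) * (1 + (lam : ℂ) * ((ρ ^ hfun α₁ α₂ c ρ : ℝ) : ℂ) *
          Complex.exp ((Real.pi : ℂ) * (hfun α₁ α₂ c ρ : ℂ) * Complex.I))))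
      (Set.Ioi 0) :=
  integrableOn_Ioi_iff_integrableAtFilter_atTop_nhdsWithin.2
    ⟨integrableAtFilter_boundaryIntegrand hlam.le ht (eventually_ge_atTop 1)
        (.inl (tendsto_rpow_hfun_atTop h0)),
      integrableAtFilter_boundaryIntegrand_nhdsGT_zero h12.le (h0.trans h12) hc1 hlam ht.le,
      (continuousOn_boundaryIntegrand hnz).locallyIntegrableOn_of_diff_singleton isOpen_Ioi
        (integrableAtFilter_boundaryIntegrand_nhdsNE h12 hc1 hlam.le ht).nhds_of_nhdsNE⟩

/-- If `c > 1` and the denominator never vanishes on `(0,∞) ∖ {c}`, the complex boundary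
integrand `ρ ↦ e^{-ρ t}/(ρ(1 + λ ρ^{h(ρ)} e^{iπ h(ρ)}))` is Lebesgue integrable on `(0,∞)`. -/
theorem boundary_integrand_integrable
    (α₁ α₂ c lam t : ℝ) (h0 : 0 < α₁) (h12 : α₁ < α₂) (h21 : α₂ < 1)
    (hc : 0 < c) (hlam : 0 < lam) (ht : 0 < t) (hc1 : 1 < c)
    (hnz : ∀ ρ : ℝ, 0 < ρ → ρ ≠ c →
      1 + (lam : ℂ) * ((ρ ^ hfun α₁ α₂ c ρ : ℝ) : ℂ) *
        Complex.exp ((Real.pi : ℂ) * (hfun α₁ α₂ c ρ : ℂ) * Complex.I) ≠ 0) :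
    IntegrableOn (fun ρ : ℝ => ((Real.exp (-ρ * t) : ℝ) : ℂ) /
        ((ρ : ℂ) * (1 + (lam : ℂ) * ((ρ ^ hfun α₁ α₂ c ρ : ℝ) : ℂ) *
          Complex.exp ((Real.pi : ℂ) * (hfun α₁ α₂ c ρ : ℂ) * Complex.I))))
      (Set.Ioi 0) :=
  boundary_integrand_integrable_general α₁ α₂ c lam t h0 h12 hlam ht hc1 hnz
end
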